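/- arXiv:2108.03079 — 5 statements merged into one kernel-verified Lean document; each statement's English description precedes it below -/
import Mathlib

section
/- (Mahler) Every continuous function f : ℤ_p → ℤ_p admits a unique expansion f(x) = Σ_{n≥0} a_n C(x,n) with a_n = (Δ^n f)(0) and a_n → 0 p-adically, where Δf(x) = f(x+1) − f(x) is the forward difference operator. -/
open Filter Finset
open scoped fwdDiff

section aux

variable {p : ℕ} [Fact p.Prime]

lemma mahler_aux_desc (x : ℤ_[p]) (n : ℕ) :
    (((descPochhammer ℤ_[p] n).eval x : ℤ_[p]) : ℚ_[p]) =
      ∏ i ∈ Finset.range n, ((x : ℚ_[p]) - (i : ℚ_[p])) := by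
  induction n with
  | zero => simp
  | succ n ih =>
    rw [descPochhammer_succ_eval, Finset.prod_range_succ, ← ih]
    push_cast
    ring

lemma mahler_aux_choose (x : ℤ_[p]) (n : ℕ) :
    ((n.factorial : ℤ_[p]) * Ring.choose x n) = (descPochhammer ℤ_[p] n).eval x := by
  rw [← nsmul_eq_mul, ← Ring.descPochhammer_eq_factorial_smul_choose,
    Polynomial.descPochhammer_smeval_eq_ascPochhammer, Polynomial.ascPochhammer_smeval_eq_eval,
    descPochhammer_eval_eq_ascPochhammer]

lemma mahler_aux_binom (binom : ℤ_[p] → ℕ → ℤ_[p])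
    (hbinom : ∀ (x : ℤ_[p]) (n : ℕ),
      (binom x n : ℚ_[p]) * (n.factorial : ℚ_[p]) =
        ∏ i ∈ Finset.range n, ((x : ℚ_[p]) - (i : ℚ_[p])))
    (x : ℤ_[p]) (n : ℕ) : binom x n = Ring.choose x n := by
  have hfac : (n.factorial : ℚ_[p]) ≠ 0 := by
    exact_mod_cast Nat.cast_ne_zero.mpr n.factorial_ne_zero
  have h1 : ((Ring.choose x n : ℤ_[p]) : ℚ_[p]) * (n.factorial : ℚ_[p]) =
      ∏ i ∈ Finset.range n, ((x : ℚ_[p]) - (i : ℚ_[p])) := by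
    rw [← mahler_aux_desc, ← mahler_aux_choose]
    push_cast
    ring
  have := (hbinom x n).trans h1.symm
  have h2 : ((binom x n : ℤ_[p]) : ℚ_[p]) = ((Ring.choose x n : ℤ_[p]) : ℚ_[p]) :=
    mul_right_cancel₀ hfac this
  exact Subtype.coe_injective h2

instance mahler_aux_bsmul : IsBoundedSMul ℤ_[p] ℚ_[p] :=
  IsBoundedSMul.of_norm_smul_le fun r x => by
    rw [Algebra.smul_def, PadicInt.algebraMap_apply, norm_mul, PadicInt.norm_def]

end aux

/-- Mahler: every continuous `f : ℤ_p → ℤ_p` has a unique expansion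
`f(x) = Σ_{n≥0} aₙ C(x,n)` with `aₙ = (Δⁿ f)(0)` tending to `0` `p`-adically,
where `Δf(x) = f(x+1) - f(x)` and `C(x,n)` is the binomial coefficient function
(characterized by `C(x,n) · n! = x(x-1)⋯(x-(n-1))` in `ℚ_p`). -/
theorem mahler_expansion (p : ℕ) [Fact p.Prime]
    (Δ : (ℤ_[p] → ℤ_[p]) → (ℤ_[p] → ℤ_[p]))
    (hΔ : ∀ (f : ℤ_[p] → ℤ_[p]) (x : ℤ_[p]), Δ f x = f (x + 1) - f x)
    (binom : ℤ_[p] → ℕ → ℤ_[p])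
    (hbinom : ∀ (x : ℤ_[p]) (n : ℕ),
      (binom x n : ℚ_[p]) * (n.factorial : ℚ_[p]) =
        ∏ i ∈ Finset.range n, ((x : ℚ_[p]) - (i : ℚ_[p])))
    (f : C(ℤ_[p], ℤ_[p])) :
    Filter.Tendsto (fun n => Δ^[n] (⇑f) 0) Filter.atTop (nhds 0) ∧
    (∀ x : ℤ_[p], HasSum (fun n => Δ^[n] (⇑f) 0 * binom x n) (f x)) ∧
    (∀ a : ℕ → ℤ_[p], Filter.Tendsto a Filter.atTop (nhds 0) →
      (∀ x : ℤ_[p], HasSum (fun n => a n * binom x n) (f x)) →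
      ∀ n, a n = Δ^[n] (⇑f) 0) := by
  have hbc := mahler_aux_binom binom hbinom
  -- the coercion as a continuous map composition
  have hcont : Continuous (fun x : ℤ_[p] => (x : ℚ_[p])) := continuous_subtype_val
  set g : C(ℤ_[p], ℚ_[p]) := ⟨fun x => ((f x : ℤ_[p]) : ℚ_[p]), hcont.comp f.continuous⟩ with hg
  -- Δ agrees with fwdDiff 1
  have hΔfwd : ∀ (F : ℤ_[p] → ℤ_[p]), Δ F = (fwdDiff (1 : ℤ_[p])) F := by
    intro F; funext x; rw [hΔ]; rfl
  have hiter : ∀ (F : ℤ_[p] → ℤ_[p]) (n : ℕ), Δ^[n] F = (fwdDiff (1 : ℤ_[p]))^[n] F := by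
    intro F n
    induction n generalizing F with
    | zero => rfl
    | succ n ih =>
      rw [Function.iterate_succ_apply, Function.iterate_succ_apply, hΔfwd, ih]
  -- commutation of iterated differences with the coercion
  have hcomm : ∀ (n : ℕ) (x : ℤ_[p]),
      ((Δ^[n] (⇑f) x : ℤ_[p]) : ℚ_[p]) = (fwdDiff (1 : ℤ_[p]))^[n] (⇑g) x := by
    intro n
    rw [hiter]
    induction n with
    | zero => intro x; rfl
    | succ n ih =>
      intro x
      rw [Function.iterate_succ_apply', Function.iterate_succ_apply']
      show (((fwdDiff (1 : ℤ_[p]))^[n] (⇑f) (x + 1) - (fwdDiff (1 : ℤ_[p]))^[n] (⇑f) x : ℤ_[p]) : ℚ_[p]) = _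
      push_cast
      rw [ih, ih]
      rfl
  -- coefficient tendsto zero (in ℚ_p, hence in ℤ_p)
  have hg0 : Filter.Tendsto (fun n => (fwdDiff (1 : ℤ_[p]))^[n] (⇑g) 0) Filter.atTop (nhds 0) :=
    PadicInt.fwdDiff_tendsto_zero g
  have htend : Filter.Tendsto (fun n => Δ^[n] (⇑f) 0) Filter.atTop (nhds 0) := by
    rw [tendsto_zero_iff_norm_tendsto_zero] at hg0 ⊢
    convert hg0 using 2 with n
    rw [PadicInt.norm_def, hcomm]
  refine ⟨htend, ?_, ?_⟩
  · -- the expansion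
    intro x
    -- Mahler's theorem in ℚ_p, evaluated at x
    have hM := (PadicInt.hasSum_mahler g).map
      (AddMonoidHom.mk' (fun h : C(ℤ_[p], ℚ_[p]) => h x) (fun a b => rfl))
      (continuous_eval_const x)
    simp only [AddMonoidHom.mk'_apply, PadicInt.mahlerTerm_apply] at hM
    -- summability in ℤ_p
    have hsummable : Summable (fun n => Δ^[n] (⇑f) 0 * binom x n) := by
      apply NonarchimedeanAddGroup.summable_of_tendsto_cofinite_zero
      rw [Nat.cofinite_eq_atTop, tendsto_zero_iff_norm_tendsto_zero]
      refine squeeze_zero (g := fun n => ‖Δ^[n] (⇑f) 0‖) (fun n => norm_nonneg _)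
        (fun n => ?_) ?_
      · rw [norm_mul]
        exact mul_le_of_le_one_right (norm_nonneg _) (PadicInt.norm_le_one _)
      · rw [← tendsto_zero_iff_norm_tendsto_zero]
        exact htend
    obtain ⟨S, hS⟩ := hsummable
    -- map the sum to ℚ_p and compare
    have hS' := hS.map (⟨⟨(fun x : ℤ_[p] => (x : ℚ_[p])), rfl⟩, fun a b => rfl⟩ : ℤ_[p] →+ ℚ_[p])
      hcont
    have hfun : (fun n => ((Δ^[n] (⇑f) 0 * binom x n : ℤ_[p]) : ℚ_[p])) =
        (fun n => mahler n x • (fwdDiff (1 : ℤ_[p]))^[n] (⇑g) 0) := by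
      funext n
      rw [Algebra.smul_def, PadicInt.algebraMap_apply, mahler_apply, ← hcomm, hbc]
      push_cast
      ring
    simp only [AddMonoidHom.coe_mk, ZeroHom.coe_mk, Function.comp_def] at hS'
    have : ((S : ℤ_[p]) : ℚ_[p]) = g x := by
      refine HasSum.unique ?_ hM
      convert hS' using 1
      exact hfun.symm
      rfl
    have hSf : S = f x := Subtype.coe_injective this
    rwa [hSf] at hS
  · -- uniqueness
    intro a ha hsum n
    set a' : ℕ → ℚ_[p] := fun n => ((a n : ℤ_[p]) : ℚ_[p]) with ha'
    have ha0 : Filter.Tendsto a' Filter.atTop (nhds 0) := by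
      have := (hcont.tendsto (0 : ℤ_[p])).comp ha
      simpa [ha', Function.comp_def] using this
    -- mahlerSeries a' = g
    have hser : ∀ x : ℤ_[p], PadicInt.mahlerSeries a' x = g x := by
      intro x
      have h1 : HasSum (fun n => mahler n x • a' n) (g x) := by
        have := (hsum x).map (⟨⟨(fun y : ℤ_[p] => (y : ℚ_[p])), rfl⟩, fun u v => rfl⟩ :
          ℤ_[p] →+ ℚ_[p]) hcont
        simp only [AddMonoidHom.coe_mk, ZeroHom.coe_mk, Function.comp_def] at this
        convert this using 1
        funext m
        show mahler m x • a' m = ((a m * binom x m : ℤ_[p]) : ℚ_[p])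
        rw [Algebra.smul_def, PadicInt.algebraMap_apply, mahler_apply, ← hbc]
        push_cast
        ring
        rfl
      rw [PadicInt.mahlerSeries_apply ha0 x, h1.tsum_eq]
    have hfun : ⇑(PadicInt.mahlerSeries (p := p) a') = ⇑g := funext hser
    have := PadicInt.fwdDiff_mahlerSeries (p := p) ha0 n
    rw [hfun, ← hcomm] at this
    exact Subtype.coe_injective this.symm
end

section
/- If μ is an R-valued measure on ℤ_p with moments m_k = ∫_{ℤ_p} x^k dμ, then the moments of the restriction of μ to the units ℤ_p^× are given by ∫_{ℤ_p^×} x^k dμ = lim_{r→∞} m_{k + (p−1)p^r}, where the limit is taken in the p-adic topology of R. -/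
open scoped Classical

private lemma pow_dvd_pow_sub_one (p : ℕ) [hp : Fact p.Prime] (x : ℤ_[p]) (hx : IsUnit x)
    (r : ℕ) : (p : ℤ_[p]) ^ (r + 1) ∣ x ^ ((p - 1) * p ^ r) - 1 := by
  induction r with
  | zero =>
    simp only [pow_zero, mul_one, pow_one]
    have h0 : PadicInt.toZMod x ≠ 0 := by
      intro h
      have : IsUnit (PadicInt.toZMod x) := hx.map PadicInt.toZMod
      rw [h] at this
      exact this.ne_zero rfl
    have : PadicInt.toZMod (x ^ (p - 1) - 1) = 0 := by
      rw [map_sub, map_pow, map_one, ZMod.pow_card_sub_one_eq_one h0, sub_self]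
    have hker : x ^ (p - 1) - 1 ∈ RingHom.ker (PadicInt.toZMod (p := p)) := this
    rw [PadicInt.ker_toZMod, PadicInt.maximalIdeal_eq_span_p, Ideal.mem_span_singleton] at hker
    simpa using hker
  | succ r ih =>
    set y : ℤ_[p] := x ^ ((p - 1) * p ^ r) with hy
    have hrw : x ^ ((p - 1) * p ^ (r + 1)) = y ^ p := by
      rw [hy, ← pow_mul, pow_succ, mul_assoc]
    rw [hrw]
    have hgeom : (∑ i ∈ Finset.range p, y ^ i) * (y - 1) = y ^ p - 1 := geom_sum_mul y p
    have hpd : (p : ℤ_[p]) ∣ ∑ i ∈ Finset.range p, y ^ i := by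
      have hpy : (p : ℤ_[p]) ∣ y - 1 := dvd_trans (dvd_pow_self _ (Nat.succ_ne_zero r)) ih
      have : (p : ℤ_[p]) ∣ ∑ i ∈ Finset.range p, (y ^ i - 1) := by
        refine Finset.dvd_sum fun i _ => ?_
        calc (p : ℤ_[p]) ∣ y - 1 := hpy
          _ ∣ y ^ i - 1 ^ i := sub_dvd_pow_sub_pow y 1 i
          _ = y ^ i - 1 := by rw [one_pow]
      have hsum : ∑ i ∈ Finset.range p, (y ^ i - 1) =
          (∑ i ∈ Finset.range p, y ^ i) - p := by
        rw [Finset.sum_sub_distrib, Finset.sum_const, Finset.card_range, nsmul_eq_mul, mul_one]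
      rw [hsum] at this
      simpa using dvd_add this (dvd_refl (p:ℤ_[p]))
    rw [← hgeom]
    have : (p : ℤ_[p]) ^ (r + 1 + 1) = p ^ 1 * p ^ (r + 1) := by ring
    rw [this]
    exact mul_dvd_mul (by simpa using hpd) ih

/-- If `μ` is an `R`-valued measure on `ℤ_p` with moments
`m_k = ∫ x^k dμ`, then the moments of the restriction of `μ` to `ℤ_p^×`
(i.e. `μ` applied to the function equal to `x^k` on units and `0` on `pℤ_p`)
are given by `∫_{ℤ_p^×} x^k dμ = lim_{r→∞} m_{k+(p-1)p^r}` in `R`. -/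
theorem restriction_to_units_moments (p : ℕ) [Fact p.Prime]
    (R : Type*) [CommRing R] [Algebra ℤ_[p] R] [TopologicalSpace R] [IsTopologicalRing R]
    (μ : C(ℤ_[p], ℤ_[p]) →L[ℤ_[p]] R) (k : ℕ) :
    ∃ g : C(ℤ_[p], ℤ_[p]),
      (∀ x : ℤ_[p], g x = if IsUnit x then x ^ k else 0) ∧
      Filter.Tendsto
        (fun r : ℕ => μ ⟨fun x => x ^ (k + (p - 1) * p ^ r), continuous_pow _⟩)
        Filter.atTop (nhds (μ g)) := by
  have hp : Fact p.Prime := inferInstance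
  have hp1 : (1 : ℝ) < p := by exact_mod_cast hp.out.one_lt
  -- the set of units is clopen
  have hopen : IsOpen {x : ℤ_[p] | IsUnit x} := by
    have : {x : ℤ_[p] | IsUnit x} = (fun x : ℤ_[p] => ‖x‖) ⁻¹' Set.Ioi (1/2 : ℝ) := by
      ext x
      simp only [Set.mem_setOf_eq, Set.mem_preimage, Set.mem_Ioi, PadicInt.isUnit_iff]
      constructor
      · intro h; rw [h]; norm_num
      · intro h
        by_contra hne
        have hlt : ‖x‖ < 1 := lt_of_le_of_ne (PadicInt.norm_le_one x) hne
        rw [PadicInt.norm_lt_one_iff_dvd] at hlt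
        have : ‖x‖ ≤ (p : ℝ)⁻¹ := by
          have := (PadicInt.norm_le_pow_iff_mem_span_pow x 1).mpr
            (by rwa [pow_one, Ideal.mem_span_singleton])
          simpa using this
        have hple : (p : ℝ)⁻¹ ≤ 1/2 := by
          rw [one_div]
          exact inv_anti₀ (by norm_num) (by exact_mod_cast hp.out.two_le)
        linarith
    rw [this]
    exact IsOpen.preimage (continuous_norm) isOpen_Ioi
  have hclosed : IsClosed {x : ℤ_[p] | IsUnit x} := by
    have : {x : ℤ_[p] | IsUnit x} = (fun x : ℤ_[p] => ‖x‖) ⁻¹' {1} := by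
      ext x; simp [PadicInt.isUnit_iff]
    rw [this]
    exact IsClosed.preimage (continuous_norm) isClosed_singleton
  have hfrontier : frontier {x : ℤ_[p] | IsUnit x} = ∅ :=
    IsClopen.frontier_eq ⟨hclosed, hopen⟩
  -- the continuous map g
  set g : C(ℤ_[p], ℤ_[p]) :=
    ⟨fun x => if IsUnit x then x ^ k else 0, by
      apply continuous_if
      · intro a ha; rw [hfrontier] at ha; exact absurd ha (Set.notMem_empty a)
      · exact (continuous_pow k).continuousOn
      · exact continuousOn_const⟩ with hg
  refine ⟨g, fun x => rfl, ?_⟩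
  -- uniform bound
  have key : ∀ r : ℕ, ∀ x : ℤ_[p],
      ‖x ^ (k + (p - 1) * p ^ r) - g x‖ ≤ (p : ℝ) ^ (-(r + 1 : ℤ)) := by
    intro r x
    have hbound : ((p : ℤ_[p]) ^ (r + 1) ∣ x ^ (k + (p - 1) * p ^ r) - g x) →
        ‖x ^ (k + (p - 1) * p ^ r) - g x‖ ≤ (p : ℝ) ^ (-(r + 1 : ℤ)) := by
      intro h
      have := (PadicInt.norm_le_pow_iff_mem_span_pow (x ^ (k + (p - 1) * p ^ r) - g x)
        (r + 1)).mpr (by rwa [Ideal.mem_span_singleton])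
      exact_mod_cast this
    by_cases hx : IsUnit x
    · apply hbound
      have : x ^ (k + (p - 1) * p ^ r) - g x = x ^ k * (x ^ ((p - 1) * p ^ r) - 1) := by
        show x ^ (k + (p - 1) * p ^ r) - (if IsUnit x then x ^ k else 0) = _
        rw [if_pos hx, pow_add]; ring
      rw [this]
      exact Dvd.dvd.mul_left (pow_dvd_pow_sub_one p x hx r) _
    · apply hbound
      have hgx : g x = 0 := if_neg hx
      rw [hgx, sub_zero]
      have hpdvd : (p : ℤ_[p]) ∣ x := by
        rw [← PadicInt.norm_lt_one_iff_dvd]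
        exact (PadicInt.not_isUnit_iff).mp hx
      have hle : r + 1 ≤ (p - 1) * p ^ r := by
        have h1 : r + 1 ≤ p ^ r := Nat.succ_le_of_lt (Nat.lt_pow_self (n := r) hp.out.one_lt)
        calc r + 1 ≤ p ^ r := h1
          _ = 1 * p ^ r := (one_mul _).symm
          _ ≤ (p - 1) * p ^ r := Nat.mul_le_mul_right _ (by have := hp.out.two_le; omega)
      calc (p : ℤ_[p]) ^ (r + 1) ∣ x ^ (r + 1) := pow_dvd_pow_of_dvd hpdvd _
        _ ∣ x ^ ((p - 1) * p ^ r) := pow_dvd_pow x hle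
        _ ∣ x ^ (k + (p - 1) * p ^ r) := pow_dvd_pow x (Nat.le_add_left _ _)
  -- convergence in C(ℤ_p, ℤ_p)
  have hconv : Filter.Tendsto
      (fun r : ℕ => (⟨fun x => x ^ (k + (p - 1) * p ^ r), continuous_pow _⟩ : C(ℤ_[p], ℤ_[p])))
      Filter.atTop (nhds g) := by
    rw [tendsto_iff_dist_tendsto_zero]
    have hsq : ∀ r : ℕ,
        dist (⟨fun x => x ^ (k + (p - 1) * p ^ r), continuous_pow _⟩ : C(ℤ_[p], ℤ_[p])) g
          ≤ (p : ℝ) ^ (-(r + 1 : ℤ)) := by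
      intro r
      rw [ContinuousMap.dist_le (by positivity)]
      intro x
      rw [dist_eq_norm]
      exact key r x
    refine squeeze_zero (fun r => dist_nonneg) hsq ?_
    have heq : ∀ r : ℕ, (p : ℝ) ^ (-(r + 1 : ℤ)) = ((p : ℝ)⁻¹) ^ (r + 1) := by
      intro r
      rw [zpow_neg, ← inv_zpow]
      norm_cast
    simp only [heq]
    have h0 : (0:ℝ) ≤ (p : ℝ)⁻¹ := by positivity
    have h1 : (p : ℝ)⁻¹ < 1 := by
      rw [inv_lt_one_iff₀]; right; exact hp1
    exact (tendsto_pow_atTop_nhds_zero_of_lt_one h0 h1).comp (Filter.tendsto_add_atTop_nat 1)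
  exact (μ.continuous.tendsto g).comp hconv
end

section
/- (Carlitz) Let χ be a nontrivial Dirichlet character modulo N, p a prime not dividing N, and n a positive integer with p^k | n. Then p^k divides the numerator of the generalized Bernoulli number B_n^χ, i.e., B_n^χ ∈ p^k · ℤ_p[ξ_N] where ξ_N is a primitive N-th root of unity. -/
open Finset


private lemma carlitz_geom_dvd {p : ℕ} (hp : p.Prime) (a b : ℤ) (h : (p:ℤ) ∣ a - b) :
    (p:ℤ) ∣ ∑ i ∈ range p, a ^ i * b ^ (p - 1 - i) := by
  have h1 : (p:ℤ) ∣ (∑ i ∈ range p, a ^ i * b ^ (p - 1 - i)) - ∑ _i ∈ range p, a ^ (p - 1) := by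
    rw [← Finset.sum_sub_distrib]
    refine Finset.dvd_sum fun i hi => ?_
    have hi' : i + (p - 1 - i) = p - 1 := by
      have := hp.pos; have := mem_range.mp hi; omega
    have hs : a ^ (p - 1) = a ^ i * a ^ (p - 1 - i) := by rw [← pow_add, hi']
    have he : a ^ i * b ^ (p - 1 - i) - a ^ (p - 1) = (b ^ (p-1-i) - a ^ (p-1-i)) * a ^ i := by
      rw [hs]; ring
    rw [he]
    exact ((dvd_sub_comm.mp h).trans (sub_dvd_pow_sub_pow b a _)).mul_right _
  have h2 : (p:ℤ) ∣ ∑ _i ∈ range p, a ^ (p - 1) := by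
    rw [Finset.sum_const, card_range, nsmul_eq_mul]
    exact Dvd.intro _ rfl
  simpa using dvd_add h1 h2

private lemma carlitz_step {p : ℕ} (hp : p.Prime) (a b : ℤ) (m : ℕ) (hm : 1 ≤ m)
    (h : (p:ℤ)^m ∣ a - b) : (p:ℤ)^(m+1) ∣ a^p - b^p := by
  have hpd : (p:ℤ) ∣ a - b := by
    refine dvd_trans ?_ h
    simpa using pow_dvd_pow (p:ℤ) hm
  obtain ⟨d, hd⟩ := carlitz_geom_dvd hp a b hpd
  obtain ⟨c, hc⟩ := h
  rw [← geom_sum₂_mul a b p, hd, hc]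
  exact ⟨d * c, by ring⟩

private lemma carlitz_pow_dvd {p : ℕ} (hp : p.Prime) (a b : ℤ) (m : ℕ) (hm : 1 ≤ m)
    (h : (p:ℤ)^m ∣ a - b) (k : ℕ) : (p:ℤ)^(m+k) ∣ a^(p^k) - b^(p^k) := by
  induction k with
  | zero => simpa using h
  | succ k ih =>
      have := carlitz_step hp (a^(p^k)) (b^(p^k)) (m+k) (by omega) ih
      rw [← pow_mul, ← pow_mul, ← pow_succ] at this
      simpa [add_assoc] using this

private lemma carlitz_pow_dvd_n {p : ℕ} (hp : p.Prime) (a b : ℤ) (m k n : ℕ) (hm : 1 ≤ m)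
    (h : (p:ℤ)^m ∣ a - b) (hdvd : p^k ∣ n) : (p:ℤ)^(m+k) ∣ a^n - b^n := by
  obtain ⟨t, rfl⟩ := hdvd
  rw [pow_mul, pow_mul]
  exact (carlitz_pow_dvd hp a b m hm h k).trans (sub_dvd_pow_sub_pow _ _ t)


section Mem
variable {p : ℕ} [Fact p.Prime] {K : Type*} [Field K] [Algebra ℚ_[p] K] [CharZero K]
  {O : Subring K}

private lemma carlitz_norm_le_one (q : ℚ) (h : 0 ≤ padicValRat p q) :
    ‖(q : ℚ_[p])‖ ≤ 1 := by
  rcases eq_or_ne q 0 with rfl | hq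
  · simp
  rw [Padic.eq_padicNorm, padicNorm.eq_zpow_of_nonzero hq]
  have hp1 : (1:ℚ) ≤ (p:ℚ) := by exact_mod_cast (Fact.out : p.Prime).one_lt.le
  have : ((p:ℚ)) ^ (-padicValRat p q) ≤ 1 := zpow_le_one_of_nonpos₀ hp1 (by omega)
  exact_mod_cast this

private lemma carlitz_mem (hZO : ∀ z : ℤ_[p], algebraMap ℚ_[p] K (z : ℚ_[p]) ∈ O)
    (q : ℚ) (h : 0 ≤ padicValRat p q) : (q : K) ∈ O := by
  have h2 := hZO ⟨(q : ℚ_[p]), carlitz_norm_le_one q h⟩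
  rwa [show (((⟨(q : ℚ_[p]), carlitz_norm_le_one q h⟩ : ℤ_[p]) : ℚ_[p])) = (q : ℚ_[p]) from rfl,
    map_ratCast] at h2

private lemma carlitz_valuation_pow (j : ℕ) : padicValRat p ((p:ℚ)^j) = j := by
  rw [padicValRat.pow _,
    padicValRat.self (Fact.out : p.Prime).one_lt]
  simp

private lemma carlitz_p_pow_mem (hZO : ∀ z : ℤ_[p], algebraMap ℚ_[p] K (z : ℚ_[p]) ∈ O)
    (q : ℚ) (j : ℕ) (h : q = 0 ∨ (j:ℤ) ≤ padicValRat p q) :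
    ∃ y ∈ O, (q : K) = (p:K)^j * y := by
  rcases eq_or_ne q 0 with rfl | hq
  · exact ⟨0, O.zero_mem, by simp⟩
  have hj := h.resolve_left hq
  have hpQ : ((p:ℚ))^j ≠ 0 := by
    have : (p:ℚ) ≠ 0 := by exact_mod_cast (Fact.out : p.Prime).ne_zero
    positivity
  refine ⟨((q / (p:ℚ)^j : ℚ) : K), carlitz_mem hZO _ ?_, ?_⟩
  · rw [padicValRat.div hq hpQ, carlitz_valuation_pow]
    omega
  · have hpK : ((p:K))^j ≠ 0 :=
      pow_ne_zero _ (by exact_mod_cast (Fact.out : p.Prime).ne_zero)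
    push_cast
    field_simp

private lemma carlitz_sum_factor {ι : Type*} (s : Finset ι) (c : K) (f : ι → K)
    (h : ∀ x ∈ s, ∃ y ∈ O, f x = c * y) : ∃ y ∈ O, ∑ x ∈ s, f x = c * y := by
  choose g hg hfg using h
  refine ⟨∑ x ∈ s.attach, g x x.2, Subring.sum_mem _ fun x _ => hg x x.2, ?_⟩
  rw [Finset.mul_sum, ← Finset.sum_attach s f]
  exact Finset.sum_congr rfl fun x _ => hfg x x.2

end Mem


private lemma carlitz_key_identity (N n Q r : ℕ) (hN : 0 < N) (hn : 0 < n) :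
    (N:ℚ)^(n-1) * (Polynomial.bernoulli n).eval ((r:ℚ)/N) * ((N:ℚ)*Q)
      = (∑ q ∈ range Q, ((r + N*q : ℕ) : ℚ)^n)
        - ∑ s ∈ range (n+1), ∑ i ∈ range s,
            ((n.choose s : ℚ) * (r:ℚ)^(n-s) * (N:ℚ)^s) *
              (bernoulli i * (((s+1).choose i : ℕ):ℚ) * (Q:ℚ)^(s+1-i) / (s+1)) := by
  have hNQ : (N:ℚ) ≠ 0 := by exact_mod_cast hN.ne'
  have heval : (Polynomial.bernoulli n).eval ((r:ℚ)/N)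
      = ∑ i ∈ range (n+1), bernoulli i * (n.choose i : ℚ) * ((r:ℚ)/N)^(n-i) := by
    rw [Polynomial.bernoulli, Polynomial.eval_finset_sum]
    simp [Polynomial.eval_monomial]
  -- LHS computation
  have hL : (N:ℚ)^(n-1) * (Polynomial.bernoulli n).eval ((r:ℚ)/N) * ((N:ℚ)*Q)
      = ∑ i ∈ range (n+1),
          ((n.choose i : ℚ) * (r:ℚ)^(n-i) * (N:ℚ)^i) * (bernoulli i * (Q:ℚ)) := by
    rw [heval, Finset.mul_sum, Finset.sum_mul]
    refine Finset.sum_congr rfl fun i hi => ?_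
    have hi' : i ≤ n := by have := mem_range.mp hi; omega
    have key : (N:ℚ)^(n-1) * (N:ℚ) = (N:ℚ)^(n-i) * (N:ℚ)^i := by
      rw [← pow_succ, ← pow_add]
      congr 1
      omega
    rw [div_pow]
    field_simp
    linear_combination (bernoulli i * (n.choose i : ℚ) * (r:ℚ)^(n-i) * (Q:ℚ)) * key
  -- main sum computation
  have hmain : (∑ q ∈ range Q, ((r + N*q : ℕ) : ℚ)^n)
      = ∑ s ∈ range (n+1), ((n.choose s : ℚ) * (r:ℚ)^(n-s) * (N:ℚ)^s) *
          (∑ q ∈ range Q, (q:ℚ)^s) := by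
    calc (∑ q ∈ range Q, ((r + N*q : ℕ) : ℚ)^n)
        = ∑ q ∈ range Q, ∑ s ∈ range (n+1),
            ((N:ℚ)*(q:ℚ))^s * (r:ℚ)^(n-s) * (n.choose s : ℚ) := by
          refine Finset.sum_congr rfl fun q _ => ?_
          have : ((r + N*q : ℕ) : ℚ) = (N:ℚ)*(q:ℚ) + (r:ℚ) := by push_cast; ring
          rw [this, add_pow]
      _ = ∑ s ∈ range (n+1), ∑ q ∈ range Q,
            ((N:ℚ)*(q:ℚ))^s * (r:ℚ)^(n-s) * (n.choose s : ℚ) := Finset.sum_comm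
      _ = _ := by
          refine Finset.sum_congr rfl fun s _ => ?_
          rw [Finset.mul_sum]
          refine Finset.sum_congr rfl fun q _ => ?_
          rw [mul_pow]
          ring
  have hsplit : ∀ s : ℕ, (∑ q ∈ range Q, (q:ℚ)^s)
      = (∑ i ∈ range s, bernoulli i * (((s+1).choose i : ℕ):ℚ) * (Q:ℚ)^(s+1-i) / (s+1))
        + bernoulli s * (Q:ℚ) := by
    intro s
    rw [sum_range_pow Q s, Finset.sum_range_succ]
    congr 1
    have h1 : s + 1 - s = 1 := by omega
    rw [h1, Nat.choose_succ_self_right, pow_one]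
    have h2 : ((s:ℚ) + 1) ≠ 0 := by positivity
    push_cast
    field_simp
  rw [hL, hmain]
  rw [Finset.sum_congr rfl fun s _ => congrArg _ (hsplit s)]
  rw [← Finset.sum_sub_distrib]
  refine Finset.sum_congr rfl fun s _ => ?_
  rw [mul_add, Finset.mul_sum]
  ring


private lemma carlitz_reindex (M : ℕ) [NeZero M] {K : Type*} [AddCommMonoid K]
    (G : ZMod M → K) : ∑ b ∈ range M, G ((b+1 : ℕ)) = ∑ z : ZMod M, G z := by
  rw [← Fin.sum_univ_eq_sum_range (fun b => G ((b+1 : ℕ)))]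
  refine Fintype.sum_bijective (fun i : Fin M => (((i:ℕ)+1 : ℕ) : ZMod M)) ?_ _ _ (fun i => rfl)
  rw [Fintype.bijective_iff_injective_and_card]
  refine ⟨fun i j h => ?_, by simp [ZMod.card]⟩
  simp only at h
  push_cast at h
  have h2 : ((i:ℕ) : ZMod M) = ((j:ℕ) : ZMod M) := by
    exact add_right_cancel h
  have := congrArg ZMod.val h2
  rwa [ZMod.val_cast_of_lt i.isLt, ZMod.val_cast_of_lt j.isLt, ← Fin.ext_iff] at this

private lemma carlitz_char_sum {p N : ℕ} [Fact p.Prime] (hpN : ¬ p ∣ N) (hN : 0 < N)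
    {K : Type*} [Field K]
    {O : Subring K}
    (χ : DirichletCharacter K N) (hχ : χ ≠ 1)
    (hχO : ∀ a : ZMod N, χ a ∈ O)
    (n k m : ℕ) (hm : 1 ≤ m) (hdvd : p ^ k ∣ n) :
    ∃ y ∈ O, ∑ b ∈ range (N * p^m), χ (((b+1 : ℕ) : ZMod N)) * (((b+1)^n : ℕ) : K)
      = (p:K)^(m+k) * y := by
  have hp : p.Prime := Fact.out
  have hQ : 0 < p ^ m := pow_pos hp.pos m
  have hM : 0 < N * p ^ m := Nat.mul_pos hN hQ
  haveI : NeZero (p ^ m) := ⟨hQ.ne'⟩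
  haveI : NeZero (N * p ^ m) := ⟨hM.ne'⟩
  haveI : NeZero N := ⟨hN.ne'⟩
  -- the integer congruence
  have hcong : ∀ b : ℕ, ∃ e : ℤ,
      (((b+1)^n : ℕ) : ℤ) = ((((b+1) % p^m)^n : ℕ) : ℤ) + (p:ℤ)^(m+k) * e := by
    intro b
    have hdiv : (p:ℤ)^m ∣ ((b+1 : ℕ) : ℤ) - (((b+1) % p^m : ℕ) : ℤ) := by
      refine ⟨(((b+1) / p^m : ℕ) : ℤ), ?_⟩
      have h0 : (((b+1) % p^m + p^m * ((b+1)/p^m) : ℕ) : ℤ) = ((b+1 : ℕ) : ℤ) :=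
        congrArg _ (Nat.mod_add_div (b+1) (p^m))
      push_cast at h0 ⊢
      linarith
    obtain ⟨e, he⟩ := carlitz_pow_dvd_n hp _ _ m k n hm hdiv hdvd
    exact ⟨e, by push_cast; push_cast at he; linarith⟩
  choose e he using hcong
  -- vanishing of the main part
  have hcop : Nat.Coprime N (p^m) :=
    (((Nat.Prime.coprime_iff_not_dvd hp).mpr hpN).symm).pow_right m
  set crt := ZMod.chineseRemainder hcop with hcrt
  have hzero : ∑ b ∈ range (N * p^m),
      χ (((b+1 : ℕ) : ZMod N)) * ((((b+1) % p^m)^n : ℕ) : K) = 0 := by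
    have hterm : ∀ b : ℕ, χ (((b+1 : ℕ) : ZMod N)) * ((((b+1) % p^m)^n : ℕ) : K)
        = χ ((crt (((b+1 : ℕ) : ZMod (N * p^m)))).1)
            * ((((crt (((b+1 : ℕ) : ZMod (N * p^m)))).2.val ^ n : ℕ)) : K) := by
      intro b
      have h1 : crt (((b+1 : ℕ) : ZMod (N * p^m)))
          = (((b+1 : ℕ) : ZMod N), ((b+1 : ℕ) : ZMod (p^m))) := by
        rw [show crt (((b+1 : ℕ) : ZMod (N * p^m))) = ((b+1:ℕ) : ZMod N × ZMod (p^m)) from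
          map_natCast (crt : ZMod (N*p^m) →+* ZMod N × ZMod (p^m)) (b+1)]
        rfl
      rw [h1]
      simp only [ZMod.val_natCast]
    calc ∑ b ∈ range (N * p^m), χ (((b+1 : ℕ) : ZMod N)) * ((((b+1) % p^m)^n : ℕ) : K)
        = ∑ b ∈ range (N * p^m),
            χ ((crt (((b+1 : ℕ) : ZMod (N * p^m)))).1)
              * ((((crt (((b+1 : ℕ) : ZMod (N * p^m)))).2.val ^ n : ℕ)) : K) := by
          exact Finset.sum_congr rfl fun b _ => hterm b
      _ = ∑ z : ZMod (N * p^m), χ ((crt z).1) * ((((crt z).2.val ^ n : ℕ)) : K) :=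
          carlitz_reindex (N * p^m) (fun z => χ ((crt z).1) * ((((crt z).2.val ^ n : ℕ)) : K))
      _ = ∑ w : ZMod N × ZMod (p^m), χ w.1 * ((w.2.val ^ n : ℕ) : K) :=
          Fintype.sum_equiv crt.toEquiv _ _ (fun z => rfl)
      _ = (∑ x : ZMod N, χ x) * (∑ y : ZMod (p^m), ((y.val ^ n : ℕ) : K)) := by
          rw [Fintype.sum_prod_type, Finset.sum_mul_sum]
      _ = 0 := by rw [MulChar.sum_eq_zero_of_ne_one hχ, zero_mul]
  refine ⟨∑ b ∈ range (N * p^m), χ (((b+1 : ℕ) : ZMod N)) * ((e b : ℤ) : K),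
    Subring.sum_mem _ fun b _ => Subring.mul_mem _ (hχO _) (intCast_mem O (e b)), ?_⟩
  calc ∑ b ∈ range (N * p^m), χ (((b+1 : ℕ) : ZMod N)) * (((b+1)^n : ℕ) : K)
      = ∑ b ∈ range (N * p^m),
          (χ (((b+1 : ℕ) : ZMod N)) * ((((b+1) % p^m)^n : ℕ) : K)
            + (p:K)^(m+k) * (χ (((b+1 : ℕ) : ZMod N)) * ((e b : ℤ) : K))) := by
        refine Finset.sum_congr rfl fun b _ => ?_
        have hb := he b
        have hK : (((b+1)^n : ℕ) : K) = ((((b+1) % p^m)^n : ℕ) : K)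
            + (p:K)^(m+k) * ((e b : ℤ) : K) := by
          have hK' := congrArg (fun x : ℤ => (x : K)) hb
          simp only [Int.cast_add, Int.cast_mul, Int.cast_pow, Int.cast_natCast] at hK'
          exact hK'
        rw [hK]
        ring
    _ = (p:K)^(m+k) * ∑ b ∈ range (N * p^m), χ (((b+1 : ℕ) : ZMod N)) * ((e b : ℤ) : K) := by
        rw [Finset.sum_add_distrib]
        rw [show (∑ b ∈ range (N * p^m), χ (((b+1 : ℕ) : ZMod N)) * ((((b+1) % p^m)^n : ℕ) : K)) = 0
          from hzero]
        rw [zero_add, Finset.mul_sum]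


private lemma carlitz_sum_range_mul {K : Type*} [AddCommMonoid K] (N Q : ℕ) (f : ℕ → K) :
    ∑ a ∈ range N, ∑ q ∈ range Q, f (a + N*q) = ∑ b ∈ range (N*Q), f b := by
  induction Q with
  | zero => simp
  | succ Q ih =>
    have h1 : ∀ a ∈ range N, ∑ q ∈ range (Q+1), f (a + N*q)
        = (∑ q ∈ range Q, f (a + N*q)) + f (a + N*Q) :=
      fun a _ => Finset.sum_range_succ _ _
    rw [Finset.sum_congr rfl h1, Finset.sum_add_distrib, ih, Nat.mul_succ,
      Finset.sum_range_add]
    congr 1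
    exact Finset.sum_congr rfl fun a _ => by rw [Nat.add_comm (N*Q) a]

/-- Carlitz: Let `χ` be a nontrivial Dirichlet character mod `N`
(valued in the subring `O` playing the role of `ℤ_p[ξ_N]` inside a `ℚ_p`-algebra
field `K`), `p` a prime not dividing `N`, and `n > 0` with `p^k ∣ n`.  Then `p^k`
divides the generalized Bernoulli number
`B_n^χ = N^{n-1} Σ_{a=1}^{N} χ(a) B_n(a/N)` in `O`. -/
theorem carlitz_divisibility (p N : ℕ) [Fact p.Prime] (hpN : ¬ p ∣ N) (hN : 0 < N)
    (K : Type*) [Field K] [Algebra ℚ_[p] K] [CharZero K]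
    (O : Subring K)
    (hZO : ∀ z : ℤ_[p], algebraMap ℚ_[p] K (z : ℚ_[p]) ∈ O)
    (χ : DirichletCharacter K N) (hχ : χ ≠ 1)
    (hχO : ∀ a : ZMod N, χ a ∈ O)
    (n k : ℕ) (hn : 0 < n) (hdvd : p ^ k ∣ n) :
    ∃ y ∈ O,
      (N : K) ^ (n - 1) *
          ∑ a ∈ Finset.range N, χ (((a + 1 : ℕ) : ZMod N)) *
            Polynomial.eval₂ (algebraMap ℚ K) (((a : K) + 1) / (N : K))
              (Polynomial.bernoulli n)
        = (p : K) ^ k * y := by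
  have hp : p.Prime := Fact.out
  have hN0 : (N:ℚ) ≠ 0 := by exact_mod_cast hN.ne'
  set w : ℕ → ℕ → ℕ → ℚ := fun s i a =>
    (n.choose s : ℚ) * ((a+1 : ℕ) : ℚ)^(n-s) * (N:ℚ)^s * bernoulli i
      * (((s+1).choose i : ℕ) : ℚ) / (((s:ℚ)+1) * (N:ℚ)) with hw
  set D : ℕ := ∑ s ∈ range (n+1), ∑ i ∈ range s, ∑ a ∈ range N,
    (padicValRat p (w s i a)).natAbs with hD
  set m : ℕ := k + 1 + D with hm'
  have hm : 1 ≤ m := by omega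
  set Q : ℕ := p ^ m with hQdef
  have hQ0 : 0 < Q := pow_pos hp.pos m
  have hQQ : ((Q:ℚ)) = (p:ℚ)^m := by rw [hQdef]; push_cast; ring
  have hQr : (Q:ℚ) ≠ 0 := Nat.cast_ne_zero.mpr hQ0.ne'
  have hNQ : (N:ℚ) * (Q:ℚ) ≠ 0 := mul_ne_zero hN0 hQr
  clear_value w D m Q
  -- Step A/B: rewrite the goal into rational casts
  have hgoal : (N : K) ^ (n - 1) *
        ∑ a ∈ Finset.range N, χ (((a + 1 : ℕ) : ZMod N)) *
          Polynomial.eval₂ (algebraMap ℚ K) (((a : K) + 1) / (N : K)) (Polynomial.bernoulli n)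
      = ∑ a ∈ range N, χ (((a+1:ℕ) : ZMod N)) *
          ((((N:ℚ)^(n-1) *
            Polynomial.eval (((a+1 : ℕ):ℚ)/(N:ℚ)) (Polynomial.bernoulli n)) : ℚ) : K) := by
    rw [Finset.mul_sum]
    refine Finset.sum_congr rfl fun a _ => ?_
    have hx : (((a : K) + 1) / (N : K)) = algebraMap ℚ K (((a+1 : ℕ) : ℚ)/(N:ℚ)) := by
      rw [eq_ratCast]
      push_cast
      ring
    rw [hx, Polynomial.eval₂_at_apply, eq_ratCast]
    push_cast
    ring
  rw [hgoal]
  -- Step C: the key identity, per `a`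
  have hkey : ∀ a : ℕ,
      ((N:ℚ)^(n-1) * Polynomial.eval (((a+1:ℕ):ℚ)/(N:ℚ)) (Polynomial.bernoulli n))
      = ((∑ q ∈ range Q, (((a+1) + N*q : ℕ) : ℚ)^n)) / ((N:ℚ)*Q)
        - (∑ s ∈ range (n+1), ∑ i ∈ range s, w s i a * (Q:ℚ)^(s-i)) := by
    intro a
    have hid := carlitz_key_identity N n Q (a+1) hN hn
    have hE : (∑ s ∈ range (n+1), ∑ i ∈ range s,
          ((n.choose s : ℚ) * ((a+1:ℕ):ℚ)^(n-s) * (N:ℚ)^s) *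
            (bernoulli i * (((s+1).choose i : ℕ):ℚ) * (Q:ℚ)^(s+1-i) / ((s:ℚ)+1)))
        = (∑ s ∈ range (n+1), ∑ i ∈ range s, w s i a * (Q:ℚ)^(s-i)) * ((N:ℚ)*Q) := by
      rw [Finset.sum_mul]
      refine Finset.sum_congr rfl fun s _ => ?_
      rw [Finset.sum_mul]
      refine Finset.sum_congr rfl fun i hi => ?_
      have hsi : s + 1 - i = (s - i) + 1 := by have := mem_range.mp hi; omega
      have hs1 : ((s:ℚ)+1) ≠ 0 := by positivity
      rw [hsi, pow_succ, hw]
      field_simp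
    apply mul_right_cancel₀ hNQ
    rw [sub_mul, div_mul_cancel₀ _ hNQ, hid, hE]
  -- split the sum into main part and tail part
  have hsplit : ∑ a ∈ range N, χ (((a+1:ℕ) : ZMod N)) *
        ((((N:ℚ)^(n-1) *
          Polynomial.eval (((a+1 : ℕ):ℚ)/(N:ℚ)) (Polynomial.bernoulli n)) : ℚ) : K)
      = (∑ a ∈ range N, χ (((a+1:ℕ) : ZMod N)) *
            ((((∑ q ∈ range Q, (((a+1) + N*q : ℕ) : ℚ)^n)) / ((N:ℚ)*Q) : ℚ) : K))
        - (∑ a ∈ range N, χ (((a+1:ℕ) : ZMod N)) *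
            (((∑ s ∈ range (n+1), ∑ i ∈ range s, w s i a * (Q:ℚ)^(s-i)) : ℚ) : K)) := by
    rw [← Finset.sum_sub_distrib]
    refine Finset.sum_congr rfl fun a _ => ?_
    rw [hkey a]
    push_cast
    ring
  rw [hsplit]
  -- Part 1 : the main part
  obtain ⟨y₀, hy₀O, hy₀⟩ := carlitz_char_sum hpN hN χ hχ hχO n k m hm hdvd
  have hvN : padicValRat p ((N:ℚ)) = 0 := by
    rw [padicValRat.of_nat, padicValNat.eq_zero_of_not_dvd hpN]
    simp
  have hNinv : ((1/(N:ℚ) : ℚ) : K) ∈ O := by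
    refine carlitz_mem hZO _ ?_
    rw [one_div, padicValRat.inv, hvN]
    norm_num
  have hpK : (p:K) ≠ 0 := by exact_mod_cast hp.ne_zero
  have hPart1 : ∃ y ∈ O, (∑ a ∈ range N, χ (((a+1:ℕ) : ZMod N)) *
        ((((∑ q ∈ range Q, (((a+1) + N*q : ℕ) : ℚ)^n)) / ((N:ℚ)*Q) : ℚ) : K)) = (p:K)^k * y := by
    refine ⟨y₀ * ((1/(N:ℚ) : ℚ) : K), O.mul_mem hy₀O hNinv, ?_⟩
    have hstep : (∑ a ∈ range N, χ (((a+1:ℕ) : ZMod N)) *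
          ((((∑ q ∈ range Q, (((a+1) + N*q : ℕ) : ℚ)^n)) / ((N:ℚ)*Q) : ℚ) : K))
        = (∑ b ∈ range (N*Q), χ (((b+1:ℕ) : ZMod N)) * (((b+1)^n : ℕ) : K))
            * ((1/((N:ℚ)*Q) : ℚ) : K) := by
      rw [← carlitz_sum_range_mul N Q
        (fun b => χ (((b+1:ℕ) : ZMod N)) * (((b+1)^n : ℕ) : K)), Finset.sum_mul]
      refine Finset.sum_congr rfl fun a _ => ?_
      have hchi : ∀ q : ℕ, ((a + N*q + 1 : ℕ) : ZMod N) = ((a+1 : ℕ) : ZMod N) := by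
        intro q
        push_cast [ZMod.natCast_self]
        ring
      have hc1 : ((((∑ q ∈ range Q, (((a+1) + N*q : ℕ) : ℚ)^n)) / ((N:ℚ)*Q) : ℚ) : K)
          = ((((∑ q ∈ range Q, (((a+1) + N*q : ℕ) : ℚ)^n) : ℚ)) : K)
            * ((1/((N:ℚ)*Q) : ℚ) : K) := by
        rw [div_eq_mul_one_div, Rat.cast_mul]
      have hc2 : ((((∑ q ∈ range Q, (((a+1) + N*q : ℕ) : ℚ)^n) : ℚ)) : K)
          = ∑ q ∈ range Q, ((((a+1) + N*q)^n : ℕ) : K) := by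
        push_cast
        rfl
      calc χ (((a+1:ℕ) : ZMod N)) *
            ((((∑ q ∈ range Q, (((a+1) + N*q : ℕ) : ℚ)^n)) / ((N:ℚ)*Q) : ℚ) : K)
          = ∑ q ∈ range Q, χ (((a+1:ℕ) : ZMod N)) *
              (((((a+1) + N*q)^n : ℕ) : K) * ((1/((N:ℚ)*Q) : ℚ) : K)) := by
            rw [hc1, hc2, Finset.sum_mul, Finset.mul_sum]
        _ = ∑ q ∈ range Q, χ (((a + N*q + 1:ℕ) : ZMod N)) * ((((a + N*q + 1)^n : ℕ)) : K)
              * ((1/((N:ℚ)*Q) : ℚ) : K) := by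
            refine Finset.sum_congr rfl fun q _ => ?_
            rw [hchi q, show a + N*q + 1 = (a+1) + N*q from by omega]
            ring
        _ = (∑ q ∈ range Q, χ (((a + N*q + 1:ℕ) : ZMod N)) * ((((a + N*q + 1)^n : ℕ)) : K))
              * ((1/((N:ℚ)*Q) : ℚ) : K) := by
            rw [Finset.sum_mul]
    have hy₀' : (∑ b ∈ range (N*Q), χ (((b+1:ℕ) : ZMod N)) * (((b+1)^n : ℕ) : K))
        = (p:K)^(m+k) * y₀ := by rw [hQdef]; exact hy₀
    rw [hstep, hy₀']
    have hc : ((1/((N:ℚ)*Q) : ℚ) : K) = ((1/(N:ℚ) : ℚ) : K) * ((p:K)^m)⁻¹ := by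
      push_cast [hQQ]
      field_simp
    rw [hc]
    have hppow : ((p:K))^m ≠ 0 := pow_ne_zero _ hpK
    have hpa : (p:K)^(m+k) = (p:K)^k * (p:K)^m := by rw [add_comm, pow_add]
    rw [hpa]
    rw [show (p:K)^k * (p:K)^m * y₀ * (((1/(N:ℚ) : ℚ) : K) * ((p:K)^m)⁻¹)
        = (p:K)^k * (y₀ * ((1/(N:ℚ) : ℚ) : K)) * ((p:K)^m * ((p:K)^m)⁻¹) from by ring,
      mul_inv_cancel₀ hppow, mul_one]
  -- Part 2 : the tail part
  have hPart2 : ∃ y ∈ O, (∑ a ∈ range N, χ (((a+1:ℕ) : ZMod N)) *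
        (((∑ s ∈ range (n+1), ∑ i ∈ range s, w s i a * (Q:ℚ)^(s-i)) : ℚ) : K))
      = (p:K)^k * y := by
    refine carlitz_sum_factor (range N) _ _ (fun a ha => ?_)
    have hterm : ∀ s ∈ range (n+1), ∀ i ∈ range s,
        ∃ y ∈ O, ((w s i a * (Q:ℚ)^(s-i) : ℚ) : K) = (p:K)^k * y := by
      intro s hs i hi
      rcases eq_or_ne (w s i a) 0 with h0 | h0
      · exact ⟨0, O.zero_mem, by rw [h0]; simp⟩
      have hcast : (Q:ℚ)^(s-i) = (p:ℚ)^(m*(s-i)) := by rw [hQQ, ← pow_mul]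
      refine carlitz_p_pow_mem hZO _ _ (Or.inr ?_)
      have hppQ : ((p:ℚ))^(m*(s-i)) ≠ 0 := by
        have : (p:ℚ) ≠ 0 := by exact_mod_cast hp.ne_zero
        positivity
      rw [hcast, padicValRat.mul h0 hppQ, carlitz_valuation_pow]
      have hb1 : (padicValRat p (w s i a)).natAbs
          ≤ ∑ b ∈ range N, (padicValRat p (w s i b)).natAbs :=
        Finset.single_le_sum (f := fun b => (padicValRat p (w s i b)).natAbs)
          (fun _ _ => Nat.zero_le _) ha
      have hb2 : (∑ b ∈ range N, (padicValRat p (w s i b)).natAbs)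
          ≤ ∑ j ∈ range s, ∑ b ∈ range N, (padicValRat p (w s j b)).natAbs :=
        Finset.single_le_sum
          (f := fun j => ∑ b ∈ range N, (padicValRat p (w s j b)).natAbs)
          (fun _ _ => Nat.zero_le _) hi
      have hb3 : (∑ j ∈ range s, ∑ b ∈ range N, (padicValRat p (w s j b)).natAbs) ≤ D :=
        hD ▸ Finset.single_le_sum
          (f := fun t => ∑ j ∈ range t, ∑ b ∈ range N, (padicValRat p (w t j b)).natAbs)
          (fun _ _ => Nat.zero_le _) hs
      have hmj : m ≤ m * (s - i) :=
        Nat.le_mul_of_pos_right m (by have := mem_range.mp hi; omega)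
      omega
    have hsum : ∃ y ∈ O, (∑ s ∈ range (n+1), ∑ i ∈ range s,
        ((w s i a * (Q:ℚ)^(s-i) : ℚ) : K)) = (p:K)^k * y :=
      carlitz_sum_factor (range (n+1)) _ _
        (fun s hs => carlitz_sum_factor (range s) _ _ (hterm s hs))
    obtain ⟨y2, hy2O, hy2⟩ := hsum
    refine ⟨χ (((a+1:ℕ) : ZMod N)) * y2, O.mul_mem (hχO _) hy2O, ?_⟩
    have hcast2 : (((∑ s ∈ range (n+1), ∑ i ∈ range s, w s i a * (Q:ℚ)^(s-i)) : ℚ) : K)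
        = ∑ s ∈ range (n+1), ∑ i ∈ range s, ((w s i a * (Q:ℚ)^(s-i) : ℚ) : K) := by
      push_cast
      rfl
    rw [hcast2, hy2]
    ring
  obtain ⟨y1, hy1O, hy1⟩ := hPart1
  obtain ⟨y2, hy2O, hy2⟩ := hPart2
  exact ⟨y1 - y2, O.sub_mem hy1O hy2O, by rw [hy1, hy2]; ring⟩
end

section
/- Let χ be a Dirichlet character modulo a prime N with χ(−1) = (−1)^k, and let G_k^χ be the Eisenstein series of weight k and level Γ_1(N) with q-expansion L(1−k,χ) + 2 Σ_{n≥1} q^n Σ_{d|n} d^{k−1} χ(d). Then for any prime p ∤ N, G_k^χ is an eigenform for the Hecke operator T_p with eigenvalue formally expressed as (T_p G_k^χ)(q) = (1 + χ(p) p^{k−1}) G_k^χ(q), where on q-expansions T_p acts by (T_p f)(q) = Σ_{n≥0} a_{np} q^n + p^{k−1} Σ_{n≥0} χ(p) a_n q^{pn} for f(q) = Σ a_n q^n. -/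
open scoped Classical

/-- Let `χ` be a Dirichlet character mod a prime `N` with
`χ(-1) = (-1)^k`, and let `G_k^χ` have `q`-expansion
`L(1-k,χ) + 2 Σ_{n≥1} q^n Σ_{d∣n} d^{k-1} χ(d)` (constant term
`L(1-k,χ) = -B_k^χ/k`).  Then for a prime `p ∤ N`, `G_k^χ` is an eigenform for
`T_p` with eigenvalue `1 + χ(p) p^{k-1}`: coefficientwise,
`a_{np} + χ(p) p^{k-1}·a_{n/p} = (1 + χ(p) p^{k-1}) a_n` (the middle term read
as `0` if `p ∤ n`). -/
theorem eisenstein_hecke_eigenform (p N k : ℕ) [Fact p.Prime] [Fact N.Prime]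
    (hpN : ¬ p ∣ N) (hk : 1 ≤ k)
    (K : Type*) [Field K] [CharZero K]
    (χ : DirichletCharacter K N)
    (hparity : χ ((-1 : ZMod N)) = (-1 : K) ^ k)
    (a : ℕ → K)
    (ha0 : a 0 =
      -((N : K) ^ (k - 1) *
            ∑ r ∈ Finset.range N, χ (((r + 1 : ℕ) : ZMod N)) *
              Polynomial.eval₂ (algebraMap ℚ K) (((r : K) + 1) / (N : K))
                (Polynomial.bernoulli k)) / (k : K))
    (han : ∀ n : ℕ, 0 < n →
      a n = 2 * ∑ d ∈ n.divisors, χ ((d : ZMod N)) * (d : K) ^ (k - 1)) :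
    ∀ n : ℕ,
      a (n * p) + χ ((p : ZMod N)) * (p : K) ^ (k - 1) *
          (if p ∣ n then a (n / p) else 0)
        = (1 + χ ((p : ZMod N)) * (p : K) ^ (k - 1)) * a n := by

  intro n
  have hp : p.Prime := Fact.out
  rcases Nat.eq_zero_or_pos n with rfl | hn
  · simp only [Nat.zero_mul, Nat.zero_div, dvd_zero, if_true]
    ring
  · set f : ℕ → K := fun d => χ ((d : ZMod N)) * (d : K) ^ (k - 1) with hf
    have hfmul : ∀ d e : ℕ, f (d * e) = f d * f e := by
      intro d e
      simp only [hf, Nat.cast_mul, map_mul, mul_pow]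
      ring
    have hdiv : (n * p).divisors = n.divisors ∪ n.divisors.image (· * p) := by
      ext d
      simp only [Finset.mem_union, Finset.mem_image, Nat.mem_divisors,
        Nat.mul_ne_zero_iff]
      constructor
      · rintro ⟨hd, -⟩
        by_cases hpd : p ∣ d
        · obtain ⟨e, rfl⟩ := hpd
          right
          refine ⟨e, ⟨?_, hn.ne'⟩, by ring⟩
          have : e * p ∣ n * p := by rwa [mul_comm p e] at hd
          exact (Nat.mul_dvd_mul_iff_right hp.pos).mp this
        · left
          exact ⟨(Nat.Coprime.dvd_of_dvd_mul_right
            ((hp.coprime_iff_not_dvd.mpr hpd).symm) hd), hn.ne'⟩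
      · rintro (⟨hd, -⟩ | ⟨e, ⟨he, -⟩, rfl⟩)
        · exact ⟨hd.mul_right p, hn.ne', hp.pos.ne'⟩
        · exact ⟨Nat.mul_dvd_mul_right he p, hn.ne', hp.pos.ne'⟩
    have hinj : Set.InjOn (· * p) ↑n.divisors := fun x _ y _ h =>
      Nat.eq_of_mul_eq_mul_right hp.pos h
    have himg : ∑ d ∈ n.divisors.image (· * p), f d = f p * ∑ d ∈ n.divisors, f d := by
      rw [Finset.sum_image hinj, Finset.mul_sum]
      exact Finset.sum_congr rfl fun d _ => by rw [hfmul, mul_comm]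
    have hsum : ∑ d ∈ (n * p).divisors, f d
        = ∑ d ∈ n.divisors, f d + f p * ∑ d ∈ n.divisors, f d
          - ∑ d ∈ (n.divisors ∩ n.divisors.image (· * p)), f d := by
      rw [hdiv, ← himg, eq_sub_iff_add_eq, Finset.sum_union_inter]
    by_cases hpn : p ∣ n
    · have hnp0 : 0 < n / p := Nat.div_pos (Nat.le_of_dvd hn hpn) hp.pos
      have hinter : n.divisors ∩ n.divisors.image (· * p)
          = (n / p).divisors.image (· * p) := by
        ext d
        simp only [Finset.mem_inter, Finset.mem_image, Nat.mem_divisors]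
        constructor
        · rintro ⟨⟨hd, -⟩, e, ⟨-, -⟩, rfl⟩
          refine ⟨e, ⟨?_, hnp0.ne'⟩, rfl⟩
          rw [Nat.dvd_div_iff_mul_dvd hpn]
          rwa [mul_comm]
        · rintro ⟨e, ⟨he, -⟩, rfl⟩
          have hep : e * p ∣ n := by
            have := (Nat.dvd_div_iff_mul_dvd hpn).mp he
            rwa [mul_comm] at this
          exact ⟨⟨hep, hn.ne'⟩, e, ⟨he.trans (Nat.div_dvd_of_dvd hpn), hn.ne'⟩, rfl⟩
      have hinj2 : Set.InjOn (· * p) ↑(n / p).divisors := fun x _ y _ h =>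
        Nat.eq_of_mul_eq_mul_right hp.pos h
      have himg2 : ∑ d ∈ (n / p).divisors.image (· * p), f d
          = f p * ∑ d ∈ (n / p).divisors, f d := by
        rw [Finset.sum_image hinj2, Finset.mul_sum]
        exact Finset.sum_congr rfl fun d _ => by rw [hfmul, mul_comm]
      rw [if_pos hpn, han _ (Nat.mul_pos hn hp.pos), han _ hn, han _ hnp0, hsum,
        hinter, himg2]
      simp only [hf]
      ring
    · have hinter : n.divisors ∩ n.divisors.image (· * p) = ∅ := by
        ext d
        simp only [Finset.mem_inter, Finset.mem_image, Nat.mem_divisors,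
          Finset.notMem_empty, iff_false, not_and]
        rintro ⟨hd, -⟩ ⟨e, ⟨-, -⟩, rfl⟩
        exact hpn ((dvd_mul_left p e).trans hd)
      rw [if_neg hpn, han _ (Nat.mul_pos hn hp.pos), han _ hn, hsum, hinter]
      simp only [Finset.sum_empty, hf]
      ring
end

section
/- The twisted divisor sum σ_{k−1}^χ(n) = Σ_{d|n} χ(d) d^{k−1} satisfies, for a prime p with χ(p) defined (p ∤ N), the Hecke recursion σ_{k−1}^χ(np) + χ(p) p^{k−1} σ_{k−1}^χ(n/p) = (1 + χ(p) p^{k−1}) σ_{k−1}^χ(n), where σ_{k−1}^χ(n/p) is interpreted as 0 if p ∤ n. -/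
open scoped Classical

private lemma sum_divisors_mul_of_coprime {A : Type*} [CommRing A] (g : ℕ → A)
    (hg : ∀ a b, g (a * b) = g a * g b) {m n : ℕ} (hm : m ≠ 0) (hn : n ≠ 0)
    (h : m.Coprime n) :
    ∑ d ∈ (m * n).divisors, g d
      = (∑ d ∈ m.divisors, g d) * ∑ d ∈ n.divisors, g d := by
  rw [Finset.sum_mul_sum, ← Finset.sum_product']
  refine Finset.sum_nbij' (i := fun d => (Nat.gcd d m, Nat.gcd d n))
    (j := fun x => x.1 * x.2) ?_ ?_ ?_ ?_ ?_
  · intro d hd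
    rw [Nat.mem_divisors] at hd
    simp only [Finset.mem_product, Nat.mem_divisors]
    exact ⟨⟨Nat.gcd_dvd_right _ _, hm⟩, ⟨Nat.gcd_dvd_right _ _, hn⟩⟩
  · rintro ⟨x, y⟩ hxy
    simp only [Finset.mem_product, Nat.mem_divisors] at hxy
    exact Nat.mem_divisors.2 ⟨mul_dvd_mul hxy.1.1 hxy.2.1, mul_ne_zero hm hn⟩
  · intro d hd
    rw [Nat.mem_divisors] at hd
    exact (Nat.gcd_mul_gcd_eq_iff_dvd_mul_of_coprime h).2 hd.1
  · rintro ⟨x, y⟩ hxy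
    simp only [Finset.mem_product, Nat.mem_divisors] at hxy
    have hym : Nat.Coprime y m := Nat.Coprime.coprime_dvd_left hxy.2.1 h.symm
    have hxn : Nat.Coprime x n := Nat.Coprime.coprime_dvd_left hxy.1.1 h
    have h1 : Nat.gcd (x * y) m = x := by
      rw [Nat.Coprime.gcd_mul_right_cancel x hym, Nat.gcd_eq_left hxy.1.1]
    have h2 : Nat.gcd (x * y) n = y := by
      rw [Nat.Coprime.gcd_mul_left_cancel y hxn, Nat.gcd_eq_left hxy.2.1]
    simp [h1, h2]
  · intro d hd
    rw [Nat.mem_divisors] at hd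
    conv_lhs => rw [← (Nat.gcd_mul_gcd_eq_iff_dvd_mul_of_coprime h).2 hd.1]
    exact hg _ _

/-- The twisted divisor sum `σ_{k-1}^χ(n) = Σ_{d∣n} χ(d) d^{k-1}`
satisfies, for a prime `p ∤ N`, the Hecke recursion
`σ_{k-1}^χ(np) + χ(p) p^{k-1} σ_{k-1}^χ(n/p) = (1 + χ(p) p^{k-1}) σ_{k-1}^χ(n)`,
where `σ_{k-1}^χ(n/p)` is read as `0` if `p ∤ n`. -/
theorem twisted_divisor_sum_hecke_recursion (N k p : ℕ) [Fact p.Prime]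
    (hpN : ¬ p ∣ N) (hk : 1 ≤ k)
    (A : Type*) [CommRing A] (χ : DirichletCharacter A N)
    (n : ℕ) (hn : 0 < n) :
    (∑ d ∈ (n * p).divisors, χ ((d : ZMod N)) * (d : A) ^ (k - 1)) +
        χ ((p : ZMod N)) * (p : A) ^ (k - 1) *
          (if p ∣ n then ∑ d ∈ (n / p).divisors, χ ((d : ZMod N)) * (d : A) ^ (k - 1)
            else 0)
      = (1 + χ ((p : ZMod N)) * (p : A) ^ (k - 1)) *
          ∑ d ∈ n.divisors, χ ((d : ZMod N)) * (d : A) ^ (k - 1) := by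
  have hp : p.Prime := Fact.out
  set g : ℕ → A := fun d => χ ((d : ZMod N)) * (d : A) ^ (k - 1) with hgdef
  have hg : ∀ a b, g (a * b) = g a * g b := by
    intro a b
    simp only [hgdef, Nat.cast_mul, map_mul, mul_pow]
    ring
  set c : A := χ ((p : ZMod N)) * (p : A) ^ (k - 1) with hc
  have hgp : ∀ i : ℕ, g (p ^ i) = c ^ i := by
    intro i
    simp only [hgdef, hc, Nat.cast_pow, map_pow, mul_pow]
    rw [← pow_mul, mul_comm i (k - 1), pow_mul]
  -- p-power partial sums
  set S : ℕ → A := fun j => ∑ i ∈ Finset.range (j + 1), c ^ i with hS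
  have hSsucc : ∀ j, S (j + 1) = S j + c ^ (j + 1) := by
    intro j; simp [hS, Finset.sum_range_succ]
  have hppow : ∀ j : ℕ, ∑ d ∈ (p ^ j).divisors, g d = S j := by
    intro j
    rw [Nat.sum_divisors_prime_pow hp]
    exact Finset.sum_congr rfl fun i _ => hgp i
  set a := n.factorization p with ha
  set m := n / p ^ a with hm
  have hn0 : n ≠ 0 := hn.ne'
  have hnm : n = p ^ a * m := (Nat.ordProj_mul_ordCompl_eq_self n p).symm
  have hm0 : m ≠ 0 := by
    intro h0; rw [h0, mul_zero] at hnm; exact hn0 hnm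
  have hcop : ∀ j : ℕ, (p ^ j).Coprime m := by
    intro j
    exact Nat.Coprime.pow_left j (Nat.coprime_ordCompl hp hn0)
  have hpj0 : ∀ j : ℕ, (p : ℕ) ^ j ≠ 0 := fun j => pow_ne_zero j hp.pos.ne'
  have key : ∀ j : ℕ, ∑ d ∈ (p ^ j * m).divisors, g d = S j * ∑ d ∈ m.divisors, g d := by
    intro j
    rw [sum_divisors_mul_of_coprime g hg (hpj0 j) hm0 (hcop j), hppow]
  have hnp : n * p = p ^ (a + 1) * m := by
    rw [hnm]; ring
  have hfn : ∑ d ∈ n.divisors, g d = S a * ∑ d ∈ m.divisors, g d := by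
    have := key a; rwa [← hnm] at this
  have hfnp : ∑ d ∈ (n * p).divisors, g d = S (a + 1) * ∑ d ∈ m.divisors, g d := by
    rw [hnp, key]
  by_cases hpn : p ∣ n
  · have ha1 : 1 ≤ a := by
      rw [ha]
      exact (hp.dvd_iff_one_le_factorization hn0).1 hpn
    obtain ⟨b, hb⟩ : ∃ b, a = b + 1 := ⟨a - 1, (Nat.succ_pred_eq_of_pos ha1).symm⟩
    have hdiv : n / p = p ^ b * m := by
      rw [hnm, hb, pow_succ]
      rw [mul_comm (p ^ b) p, mul_assoc, Nat.mul_div_cancel_left _ hp.pos]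
    have hfnd : ∑ d ∈ (n / p).divisors, g d = S b * ∑ d ∈ m.divisors, g d := by
      rw [hdiv, key]
    rw [if_pos hpn]
    show (∑ d ∈ (n * p).divisors, g d) + c * (∑ d ∈ (n / p).divisors, g d)
        = (1 + c) * ∑ d ∈ n.divisors, g d
    rw [hfnp, hfnd, hfn, hb]
    have e1 : S (b + 1 + 1) = S b + c ^ (b + 1) + c ^ (b + 1 + 1) := by
      rw [hSsucc, hSsucc]
    have e2 : S (b + 1) = S b + c ^ (b + 1) := hSsucc b
    rw [e1, e2]
    ring_nf
  · have ha0 : a = 0 := by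
      rw [ha]; exact Nat.factorization_eq_zero_of_not_dvd hpn
    rw [if_neg hpn]
    show (∑ d ∈ (n * p).divisors, g d) + c * 0 = (1 + c) * ∑ d ∈ n.divisors, g d
    have hS0 : S 0 = 1 := by simp [hS]
    have hS1 : S 1 = 1 + c := by rw [hSsucc 0, hS0, pow_one]
    rw [hfnp, hfn, ha0, hS0, hS1]
    ring
end
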